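/- Let q be a prime power coprime to n, γ ∈ ℤ/nℤ with n_γ = n/gcd(γ, n), and t a positive integer. Every q^t-cyclotomic coset modulo n contained in c_{n/q}(γ) is of equal difference if and only if (i) rad(n_γ) ∣ q^t − 1, and (ii) q^t ≡ 1 (mod 4) if 8 ∣ n_γ. -/

import Mathlib

/-- The `q`-cyclotomic coset of `γ` modulo `n`, i.e. `{γ q^j : j ≥ 0} ⊆ ℤ/nℤ`. -/
def coset (n q : ℕ) (γ : ZMod n) : Set (ZMod n) := {x | ∃ j : ℕ, x = γ * (q : ZMod n) ^ j}

/-- `τ` is the size of the coset: the least positive `t` with `γ q^t ≡ γ (mod n)`. -/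
def cosetSize (n q : ℕ) (γ : ZMod n) (τ : ℕ) : Prop :=
  IsLeast {t : ℕ | 0 < t ∧ γ * (q : ZMod n) ^ t = γ} τ

/-- The arithmetic progression `{δ + k (n/μ) : 0 ≤ k < μ}` in `ℤ/nℤ`. -/
def progression (n : ℕ) (δ : ZMod n) (μ : ℕ) : Set (ZMod n) :=
  {x | ∃ k < μ, x = δ + ((k * (n / μ) : ℕ) : ZMod n)}

/-- The coset `c_{n/q}(γ)` is of equal difference. -/
def IsEqDiffCoset (n q : ℕ) (γ : ZMod n) : Prop :=
  ∃ τ : ℕ, cosetSize n q γ τ ∧ τ ∣ n ∧ coset n q γ = progression n γ τ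

/-- The radical of `m`: the product of its distinct prime divisors. -/
def rad (m : ℕ) : ℕ := ∏ p ∈ m.primeFactors, p

/-!
Write `δ = g u` with `g = gcd(δ, n)` and `N = n / g = n_δ`: multiplication by `g` identifies
the coset of `δ` with the coset `u ⟨Q⟩` of a unit modulo `N`, `Q = q^t`, and an
equal-difference coset with the progression `u + d ℤ/Nℤ`, where `d = N / τ` and `τ` is the
order of `Q` modulo `N`.
If they agree, then `Q ≡ 1 (mod d)`; every prime `p ∣ N` divides `d`, since otherwise the
progression contains a multiple of `p`; and `8 ∣ N` forces `4 ∣ Q - 1`, because modulo `8` the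
powers of `Q ≡ 3 (mod 4)` take only two values while the progression takes more.
Conversely, under (i) and (ii) lifting the exponent gives `τ = N / gcd(Q - 1, N)`, so the coset
lies in the progression `u + gcd(Q - 1, N) ℤ/Nℤ`, and both have `τ` elements.
Finally `n_δ = n_γ` for every `δ ∈ c_{n/q}(γ)`.
-/

theorem padicValNat.pow_sub_one {p Q : ℕ} [hp : Fact p.Prime] (hQ : 1 < Q) (hpQ : p ∣ Q - 1)
    (h2 : p = 2 → 4 ∣ Q - 1) {s : ℕ} (hs : s ≠ 0) :
    padicValNat p (Q ^ s - 1) = padicValNat p (Q - 1) + padicValNat p s := by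
  have hpQ' : ¬ p ∣ Q := fun h ↦ hp.out.one_lt.ne' <|
    Nat.dvd_one.mp <| by simpa [Nat.sub_sub_self hQ.le] using Nat.dvd_sub h hpQ
  rcases hp.out.eq_two_or_odd' with rfl | hodd
  · have hQs : 1 < Q ^ s := Nat.one_lt_pow hs hQ
    rw [← Nat.cast_inj (R := ℕ∞), Nat.cast_add,
      padicValNat_eq_emultiplicity (by omega), padicValNat_eq_emultiplicity (by omega),
      padicValNat_eq_emultiplicity hs, ← Int.natCast_emultiplicity, ← Int.natCast_emultiplicity,
      ← Int.natCast_emultiplicity]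
    push_cast [hQ.le, hQs.le]
    have h4 := Int.natCast_dvd_natCast.mpr (h2 rfl)
    push_cast [hQ.le] at h4
    simpa using Int.two_pow_sub_pow' (y := 1) s (by simpa using h4) (by exact_mod_cast hpQ')
  · simpa using padicValNat.pow_sub_pow hodd hQ (by simpa using hpQ) hpQ' hs

theorem Nat.four_dvd_pow_sub_one_iff {Q : ℕ} (hQ : Q % 4 = 3) (s : ℕ) :
    4 ∣ Q ^ s - 1 ↔ 2 ∣ s := by
  have hQ1 : 1 ≤ Q ^ s := Nat.one_le_pow _ _ (by omega)
  have hQneg : (Q : ZMod 4) = -1 := by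
    rw [← ZMod.natCast_mod, hQ]; decide
  rw [← Nat.modEq_iff_dvd' hQ1, ← ZMod.natCast_eq_natCast_iff, Nat.cast_one, Nat.cast_pow,
    hQneg, eq_comm, neg_one_pow_eq_one_iff_even (by decide), even_iff_two_dvd]

theorem ZMod.natCast_eq_one_iff_dvd_sub_one {a : ℕ} (ha : 1 ≤ a) (N : ℕ) :
    (a : ZMod N) = 1 ↔ N ∣ a - 1 := by
  rw [← Nat.cast_one, ZMod.natCast_eq_natCast_iff, Nat.ModEq.comm, Nat.modEq_iff_dvd' ha]

section LiftingTheExponent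

variable {N Q : ℕ} (hQ : 1 < Q) (hrad : ∀ p ∈ N.primeFactors, p ∣ Q - 1)
  (h8 : 8 ∣ N → 4 ∣ Q - 1)
include hQ hrad h8

theorem factorization_le_factorization_pow_sub_one_iff {p s : ℕ} (hp : p.Prime) (hs : s ≠ 0) :
    N.factorization p ≤ (Q ^ s - 1).factorization p ↔
      N.factorization p - (Q - 1).factorization p ≤ s.factorization p := by
  have : Fact p.Prime := ⟨hp⟩
  by_cases hpN : p ∈ N.primeFactors
  swap
  · rw [← Nat.support_factorization, Finsupp.notMem_support_iff] at hpN
    simp [hpN]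
  have hN : N ≠ 0 := (Nat.mem_primeFactors.mp hpN).2.2
  have hpQ := hrad p hpN
  have hQs : Q ^ s - 1 ≠ 0 := Nat.sub_ne_zero_of_lt (Nat.one_lt_pow hs hQ)
  simp only [Nat.factorization_def _ hp]
  by_cases h2 : p = 2 → 4 ∣ Q - 1
  · rw [padicValNat.pow_sub_one hQ hpQ h2 hs]
    omega
  · -- `Q ≡ 3 (mod 4)` forces `v₂(N) ≤ 2`, where the answer is read off `Q ^ s` modulo `4`
    push Not at h2
    obtain ⟨rfl, h4⟩ := h2
    have hv : padicValNat 2 (Q - 1) = 1 := by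
      have hQ1 : Q - 1 ≠ 0 := by omega
      have hle := (padicValNat_dvd_iff_le (p := 2) (n := 1) hQ1).mp (by simpa using hpQ)
      have hlt := mt (padicValNat_dvd_iff_le (p := 2) (n := 2) hQ1).mpr (by simpa using h4)
      omega
    have he1 : 1 ≤ padicValNat 2 N :=
      one_le_padicValNat_of_dvd hN (Nat.dvd_of_mem_primeFactors hpN)
    have he2 : padicValNat 2 N ≤ 2 := by
      by_contra! h
      exact h4 (h8 ((padicValNat_dvd_iff_le (n := 3) hN).mpr h))
    rw [hv]
    interval_cases padicValNat 2 N
    · simp only [tsub_self, zero_le, iff_true]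
      exact one_le_padicValNat_of_dvd hQs
        (hpQ.trans (by simpa using Nat.sub_dvd_pow_sub_pow Q 1 s))
    · rw [← padicValNat_dvd_iff_le hQs, ← padicValNat_dvd_iff_le hs, pow_one]
      exact Nat.four_dvd_pow_sub_one_iff (by omega) s

theorem dvd_pow_sub_one_iff (hN : N ≠ 0) (s : ℕ) :
    N ∣ Q ^ s - 1 ↔ N / Nat.gcd (Q - 1) N ∣ s := by
  rcases eq_or_ne s 0 with rfl | hs
  · simp
  have hQs : Q ^ s - 1 ≠ 0 := Nat.sub_ne_zero_of_lt (Nat.one_lt_pow hs hQ)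
  have hgcd : Nat.gcd (Q - 1) N ∣ N := Nat.gcd_dvd_right _ _
  have hτ : N / Nat.gcd (Q - 1) N ≠ 0 :=
    (Nat.div_pos (Nat.le_of_dvd hN.bot_lt hgcd) (Nat.gcd_pos_of_pos_right _ hN.bot_lt)).ne'
  rw [← Nat.factorization_prime_le_iff_dvd hN hQs, ← Nat.factorization_prime_le_iff_dvd hτ hs]
  refine forall₂_congr fun p hp ↦ ?_
  rw [Nat.factorization_div hgcd, Nat.factorization_gcd (by omega) hN, Finsupp.tsub_apply,
    Finsupp.inf_apply, factorization_le_factorization_pow_sub_one_iff hQ hrad h8 hp hs]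
  omega

theorem ZMod.orderOf_natCast_eq_div_gcd [NeZero N] :
    orderOf (Q : ZMod N) = N / Nat.gcd (Q - 1) N := by
  have key (s : ℕ) : orderOf (Q : ZMod N) ∣ s ↔ N / Nat.gcd (Q - 1) N ∣ s := by
    rw [orderOf_dvd_iff_pow_eq_one, ← Nat.cast_pow,
      natCast_eq_one_iff_dvd_sub_one (Nat.one_le_pow _ _ (by omega)),
      dvd_pow_sub_one_iff hQ hrad h8 (NeZero.ne N)]
  exact Nat.dvd_antisymm ((key _).mpr dvd_rfl) ((key _).mp dvd_rfl)

end LiftingTheExponent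

section Progression

variable {n : ℕ}

theorem coset_eq_range (Q : ℕ) (δ : ZMod n) :
    coset n Q δ = Set.range fun j : ℕ ↦ δ * (Q : ZMod n) ^ j := by
  ext x
  exact exists_congr fun _ ↦ eq_comm

theorem progression_eq_image (δ : ZMod n) (μ : ℕ) :
    progression n δ μ = (fun k : ℕ ↦ δ + ((k * (n / μ) : ℕ) : ZMod n)) '' Set.Iio μ := by
  ext x
  simp only [progression, Set.mem_image, Set.mem_Iio, Set.mem_ofPred_eq]
  exact exists_congr fun _ ↦ and_congr_right fun _ ↦ eq_comm

theorem Nat.ncard_Iio (μ : ℕ) : (Set.Iio μ).ncard = μ := by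
  rw [← Finset.coe_range, Set.ncard_coe_finset, Finset.card_range]

theorem cosetSize_orderOf {Q : ℕ} {δ : ZMod n} (hδ : IsUnit δ)
    (hQ : 0 < orderOf (Q : ZMod n)) : cosetSize n Q δ (orderOf (Q : ZMod n)) :=
  ⟨⟨hQ, by rw [pow_orderOf_eq_one, mul_one]⟩,
    fun _ ⟨hs, h⟩ ↦ orderOf_le_of_pow_eq_one hs (hδ.mul_eq_left.mp h)⟩

theorem ncard_coset {Q : ℕ} {δ : ZMod n} (hδ : IsUnit δ) (hQ : 0 < orderOf (Q : ZMod n)) :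
    (coset n Q δ).ncard = orderOf (Q : ZMod n) := by
  have hrange :
      coset n Q δ = (fun j : ℕ ↦ δ * (Q : ZMod n) ^ j) '' Set.Iio (orderOf (Q : ZMod n)) := by
    rw [coset_eq_range]
    refine (Set.image_subset_range _ _).antisymm' ?_
    rintro _ ⟨j, rfl⟩
    exact ⟨j % orderOf (Q : ZMod n), Nat.mod_lt _ hQ, congrArg (δ * ·) (pow_mod_orderOf _ _)⟩
  rw [hrange, Set.InjOn.ncard_image, Nat.ncard_Iio]
  exact fun i hi j hj hij ↦ pow_injOn_Iio_orderOf hi hj (hδ.mul_left_cancel hij)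

variable [NeZero n]

theorem ncard_progression {μ : ℕ} (hμ : μ ∣ n) (δ : ZMod n) :
    (progression n δ μ).ncard = μ := by
  have hn : μ * (n / μ) = n := Nat.mul_div_cancel' hμ
  have hd : 0 < n / μ :=
    Nat.div_pos (Nat.le_of_dvd (NeZero.pos n) hμ) (Nat.pos_of_dvd_of_pos hμ (NeZero.pos n))
  rw [progression_eq_image, Set.InjOn.ncard_image, Nat.ncard_Iio]
  intro k hk l hl hkl
  have hlt {i : ℕ} (hi : i < μ) : i * (n / μ) < n :=
    (Nat.mul_lt_mul_of_pos_right hi hd).trans_eq hn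
  replace hkl := (ZMod.natCast_eq_natCast_iff' _ _ _).mp (add_left_cancel hkl)
  rw [Nat.mod_eq_of_lt (hlt hk), Nat.mod_eq_of_lt (hlt hl)] at hkl
  exact Nat.eq_of_mul_eq_mul_right hd hkl

theorem mem_progression_iff {μ : ℕ} (hμ : μ ∣ n) {δ x : ZMod n} :
    x ∈ progression n δ μ ↔
      ZMod.castHom (Nat.div_dvd_of_dvd hμ) (ZMod (n / μ)) x =
        ZMod.castHom (Nat.div_dvd_of_dvd hμ) (ZMod (n / μ)) δ := by
  have hn : μ * (n / μ) = n := Nat.mul_div_cancel' hμ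
  have hd : 0 < n / μ :=
    Nat.div_pos (Nat.le_of_dvd (NeZero.pos n) hμ) (Nat.pos_of_dvd_of_pos hμ (NeZero.pos n))
  rw [← sub_eq_zero, ← map_sub, ZMod.castHom_apply, ZMod.cast_eq_val, ZMod.natCast_eq_zero_iff]
  constructor
  · rintro ⟨k, hk, rfl⟩
    rw [add_sub_cancel_left, ZMod.val_natCast, Nat.mod_eq_of_lt]
    · exact dvd_mul_left _ _
    · exact (Nat.mul_lt_mul_of_pos_right hk hd).trans_eq hn
  · rintro ⟨k, hk⟩
    refine ⟨k, ?_, ?_⟩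
    · refine Nat.lt_of_mul_lt_mul_left (a := n / μ) ?_
      rw [← hk, mul_comm, hn]
      exact ZMod.val_lt _
    · rw [mul_comm, ← hk, ZMod.natCast_zmod_val, add_sub_cancel]

end Progression

theorem ZMod.add_four_ne_mul_pow {a q : ZMod 8} (ha : IsUnit a) (hq : q = 3 ∨ q = 7) (j : ℕ) :
    a + 4 ≠ a * q ^ j := by
  obtain ⟨v, rfl⟩ := ha
  have hpow : q ^ j = q ^ (j % 2) := by
    conv_lhs => rw [← Nat.mod_add_div j 2]
    rw [pow_add, pow_mul, show q ^ 2 = 1 by rcases hq with rfl | rfl <;> rfl, one_pow, mul_one]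
  have key : ∀ w : (ZMod 8)ˣ, ∀ r < 2, (w : ZMod 8) + 4 ≠ w * q ^ r := by
    rcases hq with rfl | rfl <;> decide
  rw [hpow]
  exact key v _ (Nat.mod_lt _ two_pos)

section CosetEqProgression

variable {N Q τ : ℕ} [NeZero N] {u : ZMod N} (hu : IsUnit u) (hτ : τ ∣ N)
  (h : coset N Q u = progression N u τ)
include hu hτ h

theorem div_dvd_sub_one_of_coset_eq_progression : N / τ ∣ Q - 1 := by
  rcases Nat.eq_zero_or_pos Q with rfl | hQ
  · exact dvd_zero _
  have hmem : u * (Q : ZMod N) ∈ progression N u τ := h ▸ ⟨1, by rw [pow_one]⟩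
  rwa [mem_progression_iff hτ, map_mul, (hu.map _).mul_eq_left, map_natCast,
    ZMod.natCast_eq_one_iff_dvd_sub_one hQ] at hmem

theorem dvd_div_of_coset_eq_progression (hQ : Q.Coprime N) :
    ∀ p ∈ N.primeFactors, p ∣ N / τ := by
  intro p hp
  obtain ⟨hpp, hpN, -⟩ := Nat.mem_primeFactors.mp hp
  have := Fact.mk hpp
  by_contra hpd
  have hpτ : p ∣ τ :=
    (hpp.dvd_mul.mp ((Nat.mul_div_cancel' hτ).symm ▸ hpN)).resolve_right hpd
  let π := ZMod.castHom hpN (ZMod p)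
  -- the progression contains a multiple of `p`, which cannot lie in the coset of a unit
  set z : ZMod p := -π u * ((N / τ : ℕ) : ZMod p)⁻¹ with hz
  have hd : ((N / τ : ℕ) : ZMod p) ≠ 0 := by rwa [Ne, ZMod.natCast_eq_zero_iff]
  have hk : z.val < τ :=
    z.val_lt.trans_le (Nat.le_of_dvd (Nat.pos_of_dvd_of_pos hτ (NeZero.pos N)) hpτ)
  obtain ⟨j, hj⟩ : u + ((z.val * (N / τ) : ℕ) : ZMod N) ∈ coset N Q u :=
    h ▸ ⟨z.val, hk, rfl⟩
  have hzero : π (u * (Q : ZMod N) ^ j) = 0 := by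
    rw [← hj, map_add, map_natCast, Nat.cast_mul, ZMod.natCast_zmod_val, hz, mul_assoc,
      inv_mul_cancel₀ hd, mul_one, add_neg_cancel]
  have hQu : IsUnit (Q : ZMod N) := (ZMod.isUnit_iff_coprime Q N).mpr hQ
  exact ((hu.mul (hQu.pow j)).map π).ne_zero hzero

theorem four_dvd_sub_one_of_coset_eq_progression (hQ : Q.Coprime N) (h8 : 8 ∣ N) :
    4 ∣ Q - 1 := by
  have hdQ := div_dvd_sub_one_of_coset_eq_progression hu hτ h
  have h2d : 2 ∣ N / τ := dvd_div_of_coset_eq_progression hu hτ h hQ 2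
    (Nat.mem_primeFactors.mpr ⟨Nat.prime_two, (by norm_num : 2 ∣ 8).trans h8, NeZero.ne N⟩)
  by_contra h4
  have hd4 : N / τ % 4 = 2 := by
    have : ¬ 4 ∣ N / τ := fun h4d ↦ h4 (h4d.trans hdQ)
    omega
  have hQ4 : Q % 8 = 3 ∨ Q % 8 = 7 := by
    have := h2d.trans hdQ
    omega
  have hτ2 : 2 < τ := by
    have hN := Nat.mul_div_cancel' hτ
    have hτ0 := Nat.pos_of_dvd_of_pos hτ (NeZero.pos N)
    by_contra! hτ2
    interval_cases τ <;> omega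
  -- modulo `8` this element is `u + 4`, while `u Q ^ j` is `u` or `u Q`
  obtain ⟨j, hj⟩ : u + ((2 * (N / τ) : ℕ) : ZMod N) ∈ coset N Q u :=
    h ▸ ⟨2, hτ2, rfl⟩
  let π := ZMod.castHom h8 (ZMod 8)
  have hj8 := congrArg π hj
  have h2d8 : ((2 * (N / τ) : ℕ) : ZMod 8) = 4 := by
    rw [← ZMod.natCast_mod, show 2 * (N / τ) % 8 = 4 by omega]; rfl
  have hQ8 : (Q : ZMod 8) = 3 ∨ (Q : ZMod 8) = 7 := by
    rw [← ZMod.natCast_mod]; rcases hQ4 with hr | hr <;> rw [hr] <;> [left; right] <;> rfl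
  rw [map_add, map_mul, map_pow, map_natCast, map_natCast, h2d8] at hj8
  exact ZMod.add_four_ne_mul_pow (hu.map π) hQ8 j hj8

end CosetEqProgression

theorem isEqDiffCoset_of_prime_dvd_sub_one {N Q : ℕ} [NeZero N] (hQ : 1 < Q)
    (hrad : ∀ p ∈ N.primeFactors, p ∣ Q - 1) (h8 : 8 ∣ N → 4 ∣ Q - 1) {u : ZMod N}
    (hu : IsUnit u) : IsEqDiffCoset N Q u := by
  have hgcd : Nat.gcd (Q - 1) N ∣ N := Nat.gcd_dvd_right _ _
  have hτ : N / Nat.gcd (Q - 1) N ∣ N := Nat.div_dvd_of_dvd hgcd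
  have hord := ZMod.orderOf_natCast_eq_div_gcd (N := N) hQ hrad h8
  have hpos : 0 < orderOf (Q : ZMod N) :=
    hord ▸ Nat.div_pos (Nat.le_of_dvd (NeZero.pos N) hgcd)
      (Nat.gcd_pos_of_pos_right _ (NeZero.pos N))
  refine ⟨_, hord ▸ cosetSize_orderOf hu hpos, hτ, ?_⟩
  refine Set.eq_of_subset_of_ncard_le ?_ ?_ (Set.toFinite _)
  · rintro _ ⟨j, rfl⟩
    have hQ1 : (Q : ZMod (N / (N / Nat.gcd (Q - 1) N))) = 1 := by
      rw [ZMod.natCast_eq_one_iff_dvd_sub_one hQ.le, Nat.div_div_self hgcd (NeZero.ne N)]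
      exact Nat.gcd_dvd_left _ _
    rw [mem_progression_iff hτ, map_mul, map_pow, map_natCast, hQ1, one_pow, mul_one]
  · rw [ncard_progression hτ, ncard_coset hu hpos, hord]

theorem isEqDiffCoset_iff_of_isUnit {N Q : ℕ} [NeZero N] (hQ : 1 < Q) (hco : Q.Coprime N)
    {u : ZMod N} (hu : IsUnit u) :
    IsEqDiffCoset N Q u ↔
      (∀ p ∈ N.primeFactors, p ∣ Q - 1) ∧ (8 ∣ N → 4 ∣ Q - 1) := by
  constructor
  · rintro ⟨τ, -, hτ, h⟩
    exact ⟨fun p hp ↦ (dvd_div_of_coset_eq_progression hu hτ h hco p hp).trans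
      (div_dvd_sub_one_of_coset_eq_progression hu hτ h),
      four_dvd_sub_one_of_coset_eq_progression hu hτ h hco⟩
  · rintro ⟨hrad, h8⟩
    exact isEqDiffCoset_of_prime_dvd_sub_one hQ hrad h8 hu

theorem dvd_of_progression_subset_coset {n N Q τ : ℕ} [NeZero n] {δ : ZMod n}
    (hδ : (N : ZMod n) * δ = 0) (hτ : τ ∣ n) (h : progression n δ τ ⊆ coset n Q δ) :
    τ ∣ N := by
  have hτ0 := Nat.pos_of_dvd_of_pos hτ (NeZero.pos n)
  rcases (show 1 ≤ τ from hτ0).eq_or_lt with rfl | hτ1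
  · exact one_dvd N
  obtain ⟨j, hj⟩ := h ⟨1, hτ1, rfl⟩
  -- `N` kills `δ`, hence every element of its coset, hence the common difference `n / τ`
  have hkill : ((N * (n / τ) : ℕ) : ZMod n) = 0 := by
    have := congrArg ((N : ZMod n) * ·) hj
    simp only [mul_add, ← mul_assoc, hδ, zero_mul, zero_add, one_mul] at this
    exact_mod_cast this
  rw [ZMod.natCast_eq_zero_iff] at hkill
  refine Nat.dvd_of_mul_dvd_mul_right (Nat.div_pos (Nat.le_of_dvd (NeZero.pos n) hτ) hτ0) ?_
  rwa [Nat.mul_div_cancel' hτ]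

theorem ZMod.natCast_mul_eq_natCast_mul_iff {n g N : ℕ} (hn : n = g * N) (hg : g ≠ 0)
    (a b : ℕ) :
    ((g * a : ℕ) : ZMod n) = ((g * b : ℕ) : ZMod n) ↔ (a : ZMod N) = b := by
  rw [ZMod.natCast_eq_natCast_iff, ZMod.natCast_eq_natCast_iff, hn]
  exact Nat.ModEq.mul_left_cancel_iff' hg

theorem isEqDiffCoset_natCast_mul_iff {n g N : ℕ} [NeZero n] (hn : n = g * N) (Q u : ℕ) :
    IsEqDiffCoset n Q ((g * u : ℕ) : ZMod n) ↔ IsEqDiffCoset N Q (u : ZMod N) := by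
  have hg : g ≠ 0 := by rintro rfl; exact NeZero.ne n (by simpa using hn)
  have : NeZero N := ⟨by rintro rfl; exact NeZero.ne n (by simpa using hn)⟩
  have hcast := ZMod.natCast_mul_eq_natCast_mul_iff hn hg
  let ι : ZMod N → ZMod n := fun x ↦ ((g * x.val : ℕ) : ZMod n)
  have hι (a : ℕ) : ι a = ((g * a : ℕ) : ZMod n) := (hcast _ _).mpr (ZMod.natCast_zmod_val _)
  have hιinj : ι.Injective := fun x y hxy ↦ by simpa using (hcast _ _).mp hxy
  have hpow (j : ℕ) :
      ((g * u : ℕ) : ZMod n) * (Q : ZMod n) ^ j = ι (u * (Q : ZMod N) ^ j) := by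
    rw [← Nat.cast_pow (α := ZMod N), ← Nat.cast_mul (α := ZMod N), hι]
    push_cast
    ring
  have hcoset : coset n Q ((g * u : ℕ) : ZMod n) = ι '' coset N Q u := by
    rw [coset_eq_range, coset_eq_range, ← Set.range_comp]
    exact congrArg Set.range (funext hpow)
  have hprog {τ : ℕ} (hτ : τ ∣ N) :
      progression n ((g * u : ℕ) : ZMod n) τ = ι '' progression N u τ := by
    rw [progression_eq_image, progression_eq_image, Set.image_image]
    refine Set.image_congr fun k _ ↦ ?_
    rw [← Nat.cast_add (R := ZMod N), hι, hn, Nat.mul_div_assoc g hτ]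
    push_cast
    ring
  have hsize (τ : ℕ) : cosetSize n Q ((g * u : ℕ) : ZMod n) τ ↔ cosetSize N Q u τ := by
    have hfix (t : ℕ) : ((g * u : ℕ) : ZMod n) * (Q : ZMod n) ^ t = ((g * u : ℕ) : ZMod n) ↔
        (u : ZMod N) * (Q : ZMod N) ^ t = u := by
      rw [hpow, ← hι, hιinj.eq_iff]
    simp only [cosetSize, hfix]
  constructor
  · rintro ⟨τ, hs, hτ, h⟩
    have hδ : (N : ZMod n) * ((g * u : ℕ) : ZMod n) = 0 := by
      rw [← Nat.cast_mul, ZMod.natCast_eq_zero_iff, hn]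
      exact ⟨u, by ring⟩
    have hτN := dvd_of_progression_subset_coset hδ hτ h.ge
    exact ⟨τ, (hsize τ).mp hs, hτN,
      Set.image_injective.mpr hιinj (by rw [← hcoset, ← hprog hτN, h])⟩
  · rintro ⟨τ, hs, hτ, h⟩
    exact ⟨τ, (hsize τ).mpr hs, hτ.trans ⟨g, by rw [hn, mul_comm]⟩,
      by rw [hcoset, hprog hτ, h]⟩

theorem rad_dvd_iff {m a : ℕ} : rad m ∣ a ↔ ∀ p ∈ m.primeFactors, p ∣ a :=
  ⟨fun h _ hp ↦ (Finset.dvd_prod_of_mem _ hp).trans h,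
    Finset.prod_primes_dvd a fun _ hp ↦ (Nat.prime_of_mem_primeFactors hp).prime⟩

theorem ZMod.addOrderOf_eq_div_gcd_val {n : ℕ} [NeZero n] (x : ZMod n) :
    addOrderOf x = n / Nat.gcd x.val n := by
  conv_lhs => rw [← ZMod.natCast_zmod_val x]
  rw [ZMod.addOrderOf_coe _ (NeZero.ne n), Nat.gcd_comm]

theorem addOrderOf_mul_of_isUnit {R : Type*} [Semiring R] (x : R) {c : R} (hc : IsUnit c) :
    addOrderOf (x * c) = addOrderOf x :=
  addOrderOf_injective (AddMonoidHom.mulRight c) hc.mul_left_injective x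

theorem isEqDiffCoset_iff {n Q : ℕ} [NeZero n] (hQ : 1 < Q) (hco : Q.Coprime n) (δ : ZMod n) :
    IsEqDiffCoset n Q δ ↔
      rad (n / Nat.gcd δ.val n) ∣ Q - 1 ∧ (8 ∣ n / Nat.gcd δ.val n → Q % 4 = 1) := by
  set g := Nat.gcd δ.val n
  have hg : 0 < g := Nat.gcd_pos_of_pos_right _ (NeZero.pos n)
  have hgn : g ∣ n := Nat.gcd_dvd_right _ _
  have hn : n = g * (n / g) := (Nat.mul_div_cancel' hgn).symm
  have hδ : δ = ((g * (δ.val / g) : ℕ) : ZMod n) := by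
    rw [Nat.mul_div_cancel' (Nat.gcd_dvd_left _ _), ZMod.natCast_zmod_val]
  have : NeZero (n / g) := ⟨(Nat.div_pos (Nat.le_of_dvd (NeZero.pos n) hgn) hg).ne'⟩
  have hu : IsUnit ((δ.val / g : ℕ) : ZMod (n / g)) :=
    (ZMod.isUnit_iff_coprime _ _).mpr (Nat.coprime_div_gcd_div_gcd hg)
  conv_lhs => rw [hδ]
  rw [isEqDiffCoset_natCast_mul_iff hn,
    isEqDiffCoset_iff_of_isUnit hQ (hco.coprime_dvd_right (Nat.div_dvd_of_dvd hgn)) hu,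
    rad_dvd_iff]
  exact and_congr_right fun _ ↦ imp_congr_right fun _ ↦ by omega

/-- Every `q^t`-cyclotomic coset modulo `n` contained in `c_{n/q}(γ)` is of equal
difference iff `rad(n_γ) ∣ q^t - 1` and, in case `8 ∣ n_γ`, `q^t ≡ 1 (mod 4)`. -/
theorem sub_cosets_eq_diff_iff (n q t : ℕ) (hn : 0 < n) (ht : 0 < t)
    (hq : ∃ p k : ℕ, p.Prime ∧ 0 < k ∧ q = p ^ k) (hco : Nat.Coprime q n) (γ : ZMod n) :
    (∀ δ : ZMod n, δ ∈ coset n q γ → IsEqDiffCoset n (q ^ t) δ) ↔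
      (rad (n / Nat.gcd γ.val n) ∣ q ^ t - 1 ∧
        (8 ∣ n / Nat.gcd γ.val n → q ^ t % 4 = 1)) := by
  have : NeZero n := ⟨hn.ne'⟩
  obtain ⟨p, k, hp, hk, rfl⟩ := hq
  have hQ : 1 < (p ^ k) ^ t := Nat.one_lt_pow ht.ne' (Nat.one_lt_pow hk.ne' hp.one_lt)
  have hcoQ := hco.pow_left t
  have hsame : ∀ δ ∈ coset n (p ^ k) γ, n / Nat.gcd δ.val n = n / Nat.gcd γ.val n := by
    rintro _ ⟨j, rfl⟩
    rw [← ZMod.addOrderOf_eq_div_gcd_val, ← ZMod.addOrderOf_eq_div_gcd_val]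
    exact addOrderOf_mul_of_isUnit γ (((ZMod.isUnit_iff_coprime _ n).mpr hco).pow j)
  rw [← isEqDiffCoset_iff hQ hcoQ γ]
  refine ⟨fun h ↦ h γ ⟨0, by rw [pow_zero, mul_one]⟩, fun h δ hδ ↦ ?_⟩
  rwa [isEqDiffCoset_iff hQ hcoQ, hsame δ hδ, ← isEqDiffCoset_iff hQ hcoQ]
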